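/- arXiv:2412.03860 — 5 statements merged into one kernel-verified Lean document; each statement's English description precedes it below -/
import Mathlib

section
/- Let X and Z be discrete (finitely supported) real random variables such that E[min(y, X)] ≤ E[min(y, Z)] for all real y. Then there exists a mapping m from the support of Z to probability distributions on the support of X such that: (1) sampling z from Z and then sampling from m(z) yields a random variable distributed identically to X; and (2) for every z in the support of Z, the expectation of m(z) is at most z. -/
open Finset

private lemma abel_step (s D : ℕ → ℝ) (hD0 : D 0 = 0)
    (hs : ∀ i, s (i+1) ≤ s i) (hD : ∀ i, 0 ≤ D i) :
    ∀ n : ℕ, s n * D (n+1) ≤ ∑ i ∈ Finset.range (n+1), s i * (D (i+1) - D i) := by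
  intro n
  induction n with
  | zero => simp [hD0]
  | succ n ih =>
      rw [Finset.sum_range_succ]
      have h1 : s (n+1) * D (n+1) ≤ s n * D (n+1) :=
        mul_le_mul_of_nonneg_right (hs n) (hD _)
      have h2 := mul_sub (s (n+1)) (D (n+2)) (D (n+1))
      nlinarith

private lemma abel_nonneg (s D : ℕ → ℝ) (hD0 : D 0 = 0)
    (hs0 : ∀ i, 0 ≤ s i) (hs : ∀ i, s (i+1) ≤ s i) (hD : ∀ i, 0 ≤ D i) (n : ℕ) :
    0 ≤ ∑ i ∈ Finset.range n, s i * (D (i+1) - D i) := by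
  cases n with
  | zero => simp
  | succ n =>
      exact le_trans (mul_nonneg (hs0 n) (hD (n+1))) (abel_step s D hD0 hs hD n)

private lemma concave_exp_le (A B : Finset ℝ) (p q : ℝ → ℝ) (g : ℝ → ℝ) (c0 : ℝ)
    (hp1 : ∑ x ∈ A, p x = 1) (hq1 : ∑ z ∈ B, q z = 1)
    (hA : A.Nonempty)
    (hdom : ∀ y : ℝ, ∑ x ∈ A, p x * min y x ≤ ∑ z ∈ B, q z * min y z)
    (hmono : MonotoneOn g (Set.Ici c0)) (hconc : ConcaveOn ℝ (Set.Ici c0) g)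
    (hsub : ∀ t ∈ A ∪ B, c0 ≤ t) :
    ∑ x ∈ A, p x * g x ≤ ∑ z ∈ B, q z * g z := by
  classical
  set C := A ∪ B with hC
  have hCne : C.Nonempty := hA.mono Finset.subset_union_left
  set k := C.card with hk
  have hk0 : 0 < k := Finset.card_pos.mpr hCne
  set e := C.orderIsoOfFin (rfl : C.card = k) with he
  set y : ℕ → ℝ := fun i => (e ⟨min i (k-1), by omega⟩ : ℝ) with hy
  have ymem : ∀ i, y i ∈ C := fun i => (e ⟨min i (k-1), by omega⟩).2
  have yIci : ∀ i, y i ∈ Set.Ici c0 := fun i => hsub _ (ymem i)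
  have ymono : ∀ i j : ℕ, i ≤ j → y i ≤ y j := by
    intro i j hij
    have : (⟨min i (k-1), by omega⟩ : Fin k) ≤ ⟨min j (k-1), by omega⟩ := by
      simp only [Fin.mk_le_mk]; omega
    exact Subtype.coe_le_coe.mpr (e.monotone this)
  have ylt : ∀ i j : ℕ, i < j → j ≤ k - 1 → y i < y j := by
    intro i j hij hjk
    have : (⟨min i (k-1), by omega⟩ : Fin k) < ⟨min j (k-1), by omega⟩ := by
      simp only [Fin.mk_lt_mk]; omega
    exact Subtype.coe_lt_coe.mpr (e.strictMono this)
  have ysurj : ∀ t ∈ C, ∃ j, j ≤ k - 1 ∧ t = y j := by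
    intro t ht
    refine ⟨(e.symm ⟨t, ht⟩ : Fin k), by omega, ?_⟩
    have hmin : min ((e.symm ⟨t, ht⟩ : Fin k) : ℕ) (k-1) = ((e.symm ⟨t, ht⟩ : Fin k) : ℕ) := by
      have := (e.symm ⟨t, ht⟩).2; omega
    simp only [hy]
    rw [show (⟨min ((e.symm ⟨t, ht⟩ : Fin k) : ℕ) (k-1), by omega⟩ : Fin k)
        = e.symm ⟨t, ht⟩ by ext; simp [hmin]]
    simp
  -- slopes
  set s : ℕ → ℝ := fun i => (g (y (i+1)) - g (y i)) / (y (i+1) - y i) with hs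
  have hs0 : ∀ i, 0 ≤ s i := by
    intro i
    rcases eq_or_lt_of_le (ymono i (i+1) (by omega)) with h | h
    · simp [hs, ← h]
    · exact div_nonneg (sub_nonneg.mpr (hmono (yIci i) (yIci (i+1)) h.le)) (by linarith)
  have ytopeq : ∀ i, k - 1 ≤ i → y i = y (k-1) := by
    intro i hi
    have hfin : (⟨min i (k-1), by omega⟩ : Fin k) = ⟨min (k-1) (k-1), by omega⟩ := by
      rw [Fin.mk_eq_mk]; omega
    simp only [hy, hfin]
  have hsanti : ∀ i, s (i+1) ≤ s i := by
    intro i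
    rcases lt_or_ge (i+1) (k-1) with h | h
    · have h1 : y i < y (i+1) := ylt i (i+1) (by omega) (by omega)
      have h2 : y (i+1) < y (i+2) := ylt (i+1) (i+2) (by omega) (by omega)
      exact hconc.slope_anti_adjacent (yIci i) (yIci (i+2)) h1 h2
    · have h1 : y (i+1) = y (i+2) := by
        rw [ytopeq (i+1) h, ytopeq (i+2) (by omega)]
      have : s (i+1) = 0 := by simp [hs, h1]
      rw [this]; exact hs0 i
  -- representation
  have h_term : ∀ t ∈ C, ∀ i, i < k - 1 →
      s i * (min (y (i+1)) t - min (y i) t) = g (min (y (i+1)) t) - g (min (y i) t) := by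
    intro t ht i hi
    rcases le_or_gt t (y i) with h | h
    · rw [min_eq_right h, min_eq_right (h.trans (ymono i (i+1) (by omega)))]
      simp
    · obtain ⟨j, hjk, rfl⟩ := ysurj t ht
      have hij : i < j := by
        by_contra hc
        exact absurd (ymono j i (by omega)) (not_le.mpr h)
      have h2 : y (i+1) ≤ y j := ymono (i+1) j (by omega)
      rw [min_eq_left h2, min_eq_left h.le]
      have hne : y (i+1) - y i ≠ 0 := by
        have := ylt i (i+1) (by omega) (by omega); linarith
      simp only [hs]; exact div_mul_cancel₀ _ hne
  have h_rep : ∀ t ∈ C, g t = g (y 0) +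
      ∑ i ∈ Finset.range (k-1), s i * (min (y (i+1)) t - min (y i) t) := by
    intro t ht
    have : ∑ i ∈ Finset.range (k-1), s i * (min (y (i+1)) t - min (y i) t)
        = ∑ i ∈ Finset.range (k-1), (g (min (y (i+1)) t) - g (min (y i) t)) :=
      Finset.sum_congr rfl (fun i hi => h_term t ht i (Finset.mem_range.mp hi))
    rw [this, Finset.sum_range_sub (fun i => g (min (y i) t))]
    obtain ⟨j, hjk, rfl⟩ := ysurj t ht
    rw [min_eq_right (ymono j (k-1) hjk), min_eq_left (ymono 0 j (by omega))]
    ring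
  -- expectation expansion
  have hexp : ∀ (W : Finset ℝ) (w : ℝ → ℝ), (∑ t ∈ W, w t = 1) → (W ⊆ C) →
      ∑ t ∈ W, w t * g t = g (y 0) + ∑ i ∈ Finset.range (k-1),
        s i * ((∑ t ∈ W, w t * min (y (i+1)) t) - (∑ t ∈ W, w t * min (y i) t)) := by
    intro W w hw1 hWC
    have step1 : ∑ t ∈ W, w t * g t = ∑ t ∈ W, (w t * g (y 0) +
        ∑ i ∈ Finset.range (k-1), w t * (s i * (min (y (i+1)) t - min (y i) t))) := by
      refine Finset.sum_congr rfl (fun t ht => ?_)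
      rw [h_rep t (hWC ht), mul_add, Finset.mul_sum]
    rw [step1, Finset.sum_add_distrib, ← Finset.sum_mul, hw1, one_mul]
    congr 1
    rw [Finset.sum_comm]
    refine Finset.sum_congr rfl (fun i _ => ?_)
    rw [← Finset.sum_sub_distrib, Finset.mul_sum]
    refine Finset.sum_congr rfl (fun t _ => ?_)
    ring
  set Pm : ℕ → ℝ := fun j => ∑ x ∈ A, p x * min (y j) x with hPm
  set Qm : ℕ → ℝ := fun j => ∑ z ∈ B, q z * min (y j) z with hQm
  set D : ℕ → ℝ := fun j => Qm j - Pm j with hD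
  have hDnn : ∀ j, 0 ≤ D j := fun j => sub_nonneg.mpr (hdom (y j))
  have ybot : ∀ t ∈ C, y 0 ≤ t := by
    intro t ht
    obtain ⟨j, hjk, rfl⟩ := ysurj t ht
    exact ymono 0 j (by omega)
  have hD0 : D 0 = 0 := by
    have h1 : Pm 0 = y 0 := by
      rw [hPm]
      calc ∑ x ∈ A, p x * min (y 0) x = ∑ x ∈ A, p x * y 0 :=
            Finset.sum_congr rfl (fun x hx => by
              rw [min_eq_left (ybot x (Finset.mem_union_left _ hx))])
        _ = y 0 := by rw [← Finset.sum_mul, hp1, one_mul]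
    have h2 : Qm 0 = y 0 := by
      rw [hQm]
      calc ∑ z ∈ B, q z * min (y 0) z = ∑ z ∈ B, q z * y 0 :=
            Finset.sum_congr rfl (fun z hz => by
              rw [min_eq_left (ybot z (Finset.mem_union_right _ hz))])
        _ = y 0 := by rw [← Finset.sum_mul, hq1, one_mul]
    simp [hD, h1, h2]
  have hp_exp := hexp A p hp1 Finset.subset_union_left
  have hq_exp := hexp B q hq1 Finset.subset_union_right
  have key : ∑ z ∈ B, q z * g z - ∑ x ∈ A, p x * g x
      = ∑ i ∈ Finset.range (k-1), s i * (D (i+1) - D i) := by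
    rw [hp_exp, hq_exp]
    have expand : ∀ i ∈ Finset.range (k-1), s i * (D (i+1) - D i)
        = s i * (Qm (i+1) - Qm i) - s i * (Pm (i+1) - Pm i) := by
      intro i _
      simp only [hD]; ring
    rw [Finset.sum_congr rfl expand, Finset.sum_sub_distrib]
    simp only [hQm, hPm]
    ring
  have := abel_nonneg s D hD0 hs0 hsanti hDnn (k-1)
  linarith [key]

/-- Second-order stochastic dominance implies a mean-decreasing
coupling kernel from the support of `Z` to distributions on the support of `X`.
`A`/`p` describe the finitely supported random variable `X`
(support `A`, probability mass `p`), and `B`/`q` describe `Z`. -/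
theorem stmt0 (A B : Finset ℝ) (p q : ℝ → ℝ)
    (hpA : ∀ x ∈ A, 0 < p x) (hqB : ∀ z ∈ B, 0 < q z)
    (hp1 : ∑ x ∈ A, p x = 1) (hq1 : ∑ z ∈ B, q z = 1)
    (hdom : ∀ y : ℝ, ∑ x ∈ A, p x * min y x ≤ ∑ z ∈ B, q z * min y z) :
    ∃ m : ℝ → ℝ → ℝ,
      (∀ z ∈ B, ∀ x ∈ A, 0 ≤ m z x) ∧
      (∀ z ∈ B, ∑ x ∈ A, m z x = 1) ∧
      (∀ x ∈ A, ∑ z ∈ B, q z * m z x = p x) ∧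
      (∀ z ∈ B, ∑ x ∈ A, m z x * x ≤ z) := by
  classical
  have hAne : A.Nonempty := Finset.nonempty_of_sum_ne_zero (by rw [hp1]; exact one_ne_zero)
  set a0 : ℝ := A.min' hAne with ha0
  have ha0A : a0 ∈ A := A.min'_mem hAne
  have ha0le : ∀ x ∈ A, a0 ≤ x := fun x hx => A.min'_le x hx
  -- every z in B is ≥ a0
  have hBge : ∀ z ∈ B, a0 ≤ z := by
    by_contra hc
    push_neg at hc
    obtain ⟨z0, hz0B, hz0⟩ := hc
    have hL : ∑ x ∈ A, p x * min a0 x = a0 := by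
      calc ∑ x ∈ A, p x * min a0 x = ∑ x ∈ A, p x * a0 :=
            Finset.sum_congr rfl (fun x hx => by rw [min_eq_left (ha0le x hx)])
        _ = a0 := by rw [← Finset.sum_mul, hp1, one_mul]
    have hR : ∑ z ∈ B, q z * min a0 z < a0 := by
      have : ∑ z ∈ B, q z * min a0 z < ∑ z ∈ B, q z * a0 := by
        refine Finset.sum_lt_sum (fun z hz => ?_) ⟨z0, hz0B, ?_⟩
        · exact mul_le_mul_of_nonneg_left (min_le_left _ _) (hqB z hz).le
        · have : min a0 z0 = z0 := min_eq_right hz0.le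
          rw [this]
          exact mul_lt_mul_of_pos_left hz0 (hqB z0 hz0B)
      rwa [← Finset.sum_mul, hq1, one_mul] at this
    linarith [hdom a0]
  -- vector space setup
  set K : ℝ → Set ({x // x ∈ A} → ℝ) := fun z =>
    {ν | (∀ x, 0 ≤ ν x) ∧ (∑ x, ν x) = 1 ∧ (∑ x, ν x * (x : ℝ)) ≤ z} with hK
  have hKclosed : ∀ z, IsClosed (K z) := by
    intro z
    have h1 : IsClosed {ν : ({x // x ∈ A} → ℝ) | ∀ x, 0 ≤ ν x} := by
      have : {ν : ({x // x ∈ A} → ℝ) | ∀ x, 0 ≤ ν x} = ⋂ x, {ν : ({x // x ∈ A} → ℝ) | 0 ≤ ν x} := by ext; simp [Set.mem_iInter]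
      rw [this]
      exact isClosed_iInter fun x => isClosed_le continuous_const (continuous_apply x)
    have h2 : IsClosed {ν : ({x // x ∈ A} → ℝ) | (∑ x, ν x) = 1} :=
      isClosed_eq (continuous_finset_sum _ fun x _ => continuous_apply x) continuous_const
    have h3 : IsClosed {ν : ({x // x ∈ A} → ℝ) | (∑ x, ν x * (x : ℝ)) ≤ z} :=
      isClosed_le (continuous_finset_sum _ fun x _ => (continuous_apply x).mul continuous_const)
        continuous_const
    have : K z = {ν : ({x // x ∈ A} → ℝ) | ∀ x, 0 ≤ ν x} ∩ ({ν : ({x // x ∈ A} → ℝ) | (∑ x, ν x) = 1} ∩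
        {ν : ({x // x ∈ A} → ℝ) | (∑ x, ν x * (x : ℝ)) ≤ z}) := by
      ext ν; simp [hK, and_assoc]
    rw [this]
    exact h1.inter (h2.inter h3)
  have hKcomp : ∀ z, IsCompact (K z) := by
    intro z
    have hbox : IsCompact (Set.univ.pi fun _ : {x // x ∈ A} => Set.Icc (0:ℝ) 1) :=
      isCompact_univ_pi fun _ => isCompact_Icc
    refine hbox.of_isClosed_subset (hKclosed z) ?_
    intro ν hν
    rw [Set.mem_univ_pi]
    intro x
    refine ⟨hν.1 x, ?_⟩
    calc ν x ≤ ∑ x', ν x' := Finset.single_le_sum (fun x' _ => hν.1 x') (Finset.mem_univ x)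
      _ = 1 := hν.2.1
  have hKmono : ∀ z z', z ≤ z' → K z ⊆ K z' := by
    intro z z' hzz ν hν
    exact ⟨hν.1, hν.2.1, hν.2.2.trans hzz⟩
  have hKcombo : ∀ z1 z2 (ν1 ν2 : {x // x ∈ A} → ℝ), ν1 ∈ K z1 → ν2 ∈ K z2 → ∀ a b : ℝ,
      0 ≤ a → 0 ≤ b → a + b = 1 → a • ν1 + b • ν2 ∈ K (a * z1 + b * z2) := by
    intro z1 z2 ν1 ν2 h1 h2 a b ha hb hab
    refine ⟨fun x => ?_, ?_, ?_⟩
    · simp only [Pi.add_apply, Pi.smul_apply, smul_eq_mul]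
      have := h1.1 x; have := h2.1 x
      positivity
    · simp only [Pi.add_apply, Pi.smul_apply, smul_eq_mul]
      rw [Finset.sum_add_distrib, ← Finset.mul_sum, ← Finset.mul_sum, h1.2.1, h2.2.1]
      linarith
    · simp only [Pi.add_apply, Pi.smul_apply, smul_eq_mul]
      have heq : ∑ x : {x // x ∈ A}, (a * ν1 x + b * ν2 x) * (x : ℝ)
          = a * (∑ x, ν1 x * (x : ℝ)) + b * (∑ x, ν2 x * (x : ℝ)) := by
        rw [Finset.mul_sum, Finset.mul_sum, ← Finset.sum_add_distrib]
        exact Finset.sum_congr rfl fun x _ => by ring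
      rw [heq]
      have := h1.2.2; have := h2.2.2
      nlinarith
  have hKsingle : ∀ (x : {x // x ∈ A}) (z : ℝ), (x : ℝ) ≤ z → Pi.single x 1 ∈ K z := by
    intro x z hxz
    refine ⟨fun x' => ?_, ?_, ?_⟩
    · rw [Pi.single_apply]
      split <;> norm_num
    · simp [Pi.single_apply]
    · have : ∑ x' : {x // x ∈ A}, (Pi.single x 1 : {x // x ∈ A} → ℝ) x' * (x' : ℝ) = (x : ℝ) := by
        simp [Pi.single_apply, ite_mul]
      rw [this]; exact hxz
  have hKne : ∀ z, a0 ≤ z → (K z).Nonempty :=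
    fun z hz => ⟨Pi.single ⟨a0, ha0A⟩ 1, hKsingle ⟨a0, ha0A⟩ z hz⟩
  -- the feasible set S
  set T : Set ({z // z ∈ B} → ({x // x ∈ A} → ℝ)) := Set.univ.pi fun z => K (z : ℝ) with hT
  set Φ : ({z // z ∈ B} → ({x // x ∈ A} → ℝ)) → ({x // x ∈ A} → ℝ) := fun ν => ∑ z : {z // z ∈ B}, q (z : ℝ) • ν z with hΦ
  have hΦcont : Continuous Φ :=
    continuous_finset_sum _ fun z _ => (continuous_apply z).const_smul (q (z : ℝ))
  set S : Set ({x // x ∈ A} → ℝ) := Φ '' T with hS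
  have hTcomp : IsCompact T := isCompact_univ_pi fun z => hKcomp (z : ℝ)
  have hScomp : IsCompact S := hTcomp.image hΦcont
  have hSconv : Convex ℝ S := by
    rintro r1 ⟨ν1, hν1, rfl⟩ r2 ⟨ν2, hν2, rfl⟩ a b ha hb hab
    refine ⟨fun z => a • ν1 z + b • ν2 z, fun z _ => ?_, ?_⟩
    · have h := hKcombo _ _ _ _ (hν1 z (Set.mem_univ z)) (hν2 z (Set.mem_univ z)) a b ha hb hab
      rwa [show a * (z:ℝ) + b * (z:ℝ) = (z:ℝ) by rw [← add_mul, hab, one_mul]] at h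
    · simp only [hΦ, Finset.smul_sum]
      rw [← Finset.sum_add_distrib]
      refine Finset.sum_congr rfl fun z _ => ?_
      funext x
      simp only [Pi.add_apply, Pi.smul_apply, smul_eq_mul]
      ring
  -- p as a vector
  set pA : {x // x ∈ A} → ℝ := fun x => p (x : ℝ) with hpAdef
  have hmain : pA ∈ S := by
    by_contra hp
    obtain ⟨φ, u, hSlt, hugt⟩ := geometric_hahn_banach_closed_point hSconv hScomp.isClosed hp
    set g : ℝ → ℝ := fun z => sSup (φ '' K z) with hg
    have hbdd : ∀ z, BddAbove (φ '' K z) := fun z => ((hKcomp z).image φ.continuous).bddAbove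
    have hub : ∀ z ν, ν ∈ K z → φ ν ≤ g z := fun z ν hν => le_csSup (hbdd z) ⟨ν, hν, rfl⟩
    have hattain : ∀ z, a0 ≤ z → ∃ ν, ν ∈ K z ∧ φ ν = g z := by
      intro z hz
      obtain ⟨ν, hν, hmax⟩ := (hKcomp z).exists_isMaxOn (hKne z hz) φ.continuous.continuousOn
      refine ⟨ν, hν, ?_⟩
      have hgr : IsGreatest (φ '' K z) (φ ν) := ⟨⟨ν, hν, rfl⟩,
        fun w hw => by obtain ⟨μ, hμ, rfl⟩ := hw; exact hmax hμ⟩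
      rw [hg]
      exact hgr.csSup_eq.symm
    have hgmono : MonotoneOn g (Set.Ici a0) := by
      intro z1 h1 z2 h2 h12
      exact csSup_le_csSup (hbdd z2) ((hKne z1 h1).image φ) (Set.image_mono (hKmono _ _ h12))
    have hgconc : ConcaveOn ℝ (Set.Ici a0) g := by
      refine ⟨convex_Ici a0, fun z1 hz1 z2 hz2 a b ha hb hab => ?_⟩
      obtain ⟨ν1, hν1, hφ1⟩ := hattain z1 hz1
      obtain ⟨ν2, hν2, hφ2⟩ := hattain z2 hz2
      have hcm := hKcombo z1 z2 ν1 ν2 hν1 hν2 a b ha hb hab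
      have hle : φ (a • ν1 + b • ν2) ≤ g (a * z1 + b * z2) := hub _ _ hcm
      rw [map_add, map_smul, map_smul] at hle
      simpa [hφ1, hφ2, smul_eq_mul] using hle
    have hcomp := concave_exp_le A B p q g a0 hp1 hq1 hAne hdom hgmono hgconc
      (fun t ht => by
        rcases Finset.mem_union.mp ht with h | h
        exacts [ha0le t h, hBge t h])
    have hrep : ∀ ν : {x // x ∈ A} → ℝ,
        φ ν = ∑ x : {x // x ∈ A}, ν x * φ (Pi.single x 1) := by
      intro ν
      have hν : ν = ∑ x : {x // x ∈ A}, ν x • (Pi.single x 1 : {x // x ∈ A} → ℝ) := by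
        rw [show (∑ x : {x // x ∈ A}, ν x • (Pi.single x 1 : {x // x ∈ A} → ℝ))
            = ∑ x : {x // x ∈ A}, Pi.single x (ν x) from
          Finset.sum_congr rfl fun x _ => by rw [← Pi.single_smul, smul_eq_mul, mul_one]]
        exact (Finset.univ_sum_single ν).symm
      conv_lhs => rw [hν]
      rw [map_sum]
      exact Finset.sum_congr rfl fun x _ => by rw [map_smul, smul_eq_mul]
    have hlow : φ pA ≤ ∑ x ∈ A, p x * g x := by
      have h1 : φ pA = ∑ x : {x // x ∈ A}, p (x : ℝ) * φ (Pi.single x 1) := hrep pA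
      have h2 : ∑ x : {x // x ∈ A}, p (x : ℝ) * φ (Pi.single x 1)
          ≤ ∑ x : {x // x ∈ A}, p (x : ℝ) * g (x : ℝ) :=
        Finset.sum_le_sum fun x _ =>
          mul_le_mul_of_nonneg_left (hub _ _ (hKsingle x _ le_rfl)) (hpA _ x.2).le
      have h3 : ∑ x : {x // x ∈ A}, p (x : ℝ) * g (x : ℝ) = ∑ x ∈ A, p x * g x :=
        Finset.sum_coe_sort A (fun x => p x * g x)
      linarith
    set νopt : {z // z ∈ B} → ({x // x ∈ A} → ℝ) :=
      fun z => (hattain (z : ℝ) (hBge _ z.2)).choose with hνopt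
    have hνspec : ∀ z : {z // z ∈ B}, νopt z ∈ K (z : ℝ) ∧ φ (νopt z) = g (z : ℝ) :=
      fun z => (hattain (z : ℝ) (hBge _ z.2)).choose_spec
    have hmem : Φ νopt ∈ S := by
      rw [hS]
      exact ⟨νopt, fun z _ => (hνspec z).1, rfl⟩
    have hφS : φ (Φ νopt) = ∑ z ∈ B, q z * g z := by
      simp only [hΦ]
      rw [map_sum, ← Finset.sum_coe_sort B (fun z => q z * g z)]
      exact Finset.sum_congr rfl fun z _ => by rw [map_smul, smul_eq_mul, (hνspec z).2]
    have hlt := hSlt _ hmem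
    linarith
  rw [hS] at hmain
  obtain ⟨ν, hνT, hνsum⟩ := hmain
  have hνK : ∀ z : {z // z ∈ B}, ν z ∈ K (z : ℝ) := fun z => hνT z (Set.mem_univ z)
  set m : ℝ → ℝ → ℝ := fun z x =>
    if hz : z ∈ B then if hx : x ∈ A then ν ⟨z, hz⟩ ⟨x, hx⟩ else 0 else 0 with hm
  refine ⟨m, ?_, ?_, ?_, ?_⟩
  · intro z hz x hx
    simp only [hm]
    rw [dif_pos hz, dif_pos hx]
    exact (hνK ⟨z, hz⟩).1 ⟨x, hx⟩
  · intro z hz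
    rw [← Finset.sum_coe_sort A (fun x => m z x)]
    have hmx : ∀ x : {x // x ∈ A}, m z ↑x = ν ⟨z, hz⟩ x := fun x => by
      simp only [hm]; rw [dif_pos hz, dif_pos x.2]
    simp only [hmx]
    exact (hνK ⟨z, hz⟩).2.1
  · intro x hx
    have hcf := congrFun hνsum ⟨x, hx⟩
    simp only [hΦ, hpAdef, Finset.sum_apply, Pi.smul_apply, smul_eq_mul] at hcf
    rw [← Finset.sum_coe_sort B (fun z => q z * m z x)]
    have hmz : ∀ z : {z // z ∈ B}, m ↑z x = ν z ⟨x, hx⟩ := fun z => by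
      simp only [hm]; rw [dif_pos z.2, dif_pos hx]
    simp only [hmz]
    exact hcf
  · intro z hz
    rw [← Finset.sum_coe_sort A (fun x => m z x * x)]
    have hmx : ∀ x : {x // x ∈ A}, m z ↑x = ν ⟨z, hz⟩ x := fun x => by
      simp only [hm]; rw [dif_pos hz, dif_pos x.2]
    simp only [hmx]
    exact (hνK ⟨z, hz⟩).2.2
end

section
/- Let Z be an integrable real random variable, c ≥ 0, and suppose g is a real number satisfying c + E[Z] = E[max(g, Z)]. Then for every real y: min{ y, c + E[min(y, Z)] } = E[ min( y, max(g, Z) ) ]. -/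
open MeasureTheory

lemma key_min_integral {Ω : Type*} [MeasurableSpace Ω] (μ : Measure Ω) [IsProbabilityMeasure μ]
    (y : ℝ) (f : Ω → ℝ) (hf : Integrable f μ) :
    ∫ ω, min y (f ω) ∂μ = y + ∫ ω, f ω ∂μ - ∫ ω, max y (f ω) ∂μ := by
  have hmax : Integrable (fun ω => max y (f ω)) μ := (integrable_const y).sup hf
  have h : ∀ ω, min y (f ω) = y + f ω - max y (f ω) := by
    intro ω
    rcases le_total y (f ω) with h | h <;> simp [min_eq_left, min_eq_right, max_eq_left,
      max_eq_right, h] <;> ring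
  calc ∫ ω, min y (f ω) ∂μ = ∫ ω, (y + f ω - max y (f ω)) ∂μ := by
        simp only [h]
    _ = (∫ ω, (y + f ω) ∂μ) - ∫ ω, max y (f ω) ∂μ :=
        integral_sub ((integrable_const y).add hf) hmax
    _ = y + ∫ ω, f ω ∂μ - ∫ ω, max y (f ω) ∂μ := by
        rw [integral_add (integrable_const y) hf, integral_const]
        simp

/-- if `g` is the water-filling index of an action with cost
`c ≥ 0` and outcome `Z`, i.e. `c + E[Z] = E[max(g, Z)]`, then for every `y`,
`min{y, c + E[min(y,Z)]} = E[min(y, max(g,Z))]`. -/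
theorem stmt3 {Ω : Type*} [MeasurableSpace Ω] (μ : Measure Ω) [IsProbabilityMeasure μ]
    (Z : Ω → ℝ) (hZ : Integrable Z μ) (c : ℝ) (hc : 0 ≤ c) (g : ℝ)
    (hg : c + ∫ ω, Z ω ∂μ = ∫ ω, max g (Z ω) ∂μ) :
    ∀ y : ℝ, min y (c + ∫ ω, min y (Z ω) ∂μ) = ∫ ω, min y (max g (Z ω)) ∂μ := by
  intro y
  have hmaxg : Integrable (fun ω => max g (Z ω)) μ := (integrable_const g).sup hZ
  have hmaxy : Integrable (fun ω => max y (Z ω)) μ := (integrable_const y).sup hZ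
  have hminZ := key_min_integral μ y Z hZ
  rcases le_total y g with hy | hy
  · -- RHS = y
    have hr : ∫ ω, min y (max g (Z ω)) ∂μ = y := by
      have : ∀ ω, min y (max g (Z ω)) = y := fun ω =>
        min_eq_left (hy.trans (le_max_left _ _))
      simp only [this, integral_const]
      simp
    rw [hr]
    apply min_eq_left
    have hmono : ∫ ω, max y (Z ω) ∂μ ≤ ∫ ω, max g (Z ω) ∂μ :=
      integral_mono hmaxy hmaxg fun ω => max_le_max hy le_rfl
    rw [hminZ]
    linarith
  · -- g ≤ y
    have hcomp : ∀ ω, max y (max g (Z ω)) = max y (Z ω) := by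
      intro ω
      rw [← max_assoc, max_eq_left hy]
    have hr : ∫ ω, min y (max g (Z ω)) ∂μ = c + ∫ ω, min y (Z ω) ∂μ := by
      rw [key_min_integral μ y _ hmaxg]
      simp only [hcomp]
      rw [hminZ]
      linarith
    rw [hr]
    apply min_eq_right
    rw [← hr]
    have : ∫ ω, min y (max g (Z ω)) ∂μ ≤ ∫ ω, (y : ℝ) ∂μ :=
      integral_mono ((integrable_const y).inf hmaxg) (integrable_const y)
        fun ω => min_le_left _ _
    simpa using this
end

section
/- Let X be a nonnegative integrable random variable and let c^o, c^p > 0 with c^p ≤ c^o. Let g^o satisfy c^o = E[(g^o − X)⁺] and let g^p satisfy c^p = E[(g^p − X − c^o)⁺]. Then c^o/g^o ≥ c^p/(g^p − c^o), and consequently g^o/g^p ≤ (c^o/c^p)·(1 − c^o/g^p). -/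
open MeasureTheory

/-- index inequality for Pandora's Box with Partial Inspection.
With opening index `g^o` solving `c^o = E[(g^o − X)⁺]` and peeking index `g^p`
solving `c^p = E[(g^p − X − c^o)⁺]`, one has `c^o/g^o ≥ c^p/(g^p − c^o)` and
consequently `g^o/g^p ≤ (c^o/c^p)·(1 − c^o/g^p)`. -/
theorem stmt8 {Ω : Type*} [MeasurableSpace Ω] (μ : Measure Ω) [IsProbabilityMeasure μ]
    (X : Ω → ℝ) (hX : Integrable X μ) (hXpos : ∀ ω, 0 ≤ X ω)
    (co cp go gp : ℝ) (hcp : 0 < cp) (hcpco : cp ≤ co)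
    (hgo : 0 < go) (hgp : co < gp)
    (hgoEq : co = ∫ ω, max (go - X ω) 0 ∂μ)
    (hgpEq : cp = ∫ ω, max (gp - X ω - co) 0 ∂μ) :
    cp / (gp - co) ≤ co / go ∧ go / gp ≤ (co / cp) * (1 - co / gp) := by
  set a : ℝ := gp - co with ha
  have ha0 : 0 < a := by simp [ha]; linarith
  have hco : 0 < co := lt_of_lt_of_le hcp hcpco
  have hgp0 : 0 < gp := lt_trans hco hgp
  have hint1 : Integrable (fun ω => max (go - X ω) 0) μ :=
    ((integrable_const go).sub hX).pos_part
  have hint2 : Integrable (fun ω => max (a - X ω) 0) μ :=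
    ((integrable_const a).sub hX).pos_part
  have first : cp / a ≤ co / go := by
    rcases le_total a go with h | h
    · -- pointwise: max(a−x,0) ≤ (a/go)·max(go−x,0) for x ≥ 0
      have hpt : ∀ ω, max (a - X ω) 0 ≤ (a / go) * max (go - X ω) 0 := by
        intro ω
        have hx := hXpos ω
        rcases le_total a (X ω) with hax | hax
        · have h1 : max (a - X ω) 0 = 0 := max_eq_right (by linarith)
          rw [h1]
          positivity
        · have h1 : max (a - X ω) 0 = a - X ω := max_eq_left (by linarith)
          have h2 : max (go - X ω) 0 = go - X ω := max_eq_left (by linarith)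
          rw [h1, h2]
          rw [div_mul_eq_mul_div, le_div_iff₀ hgo]
          nlinarith
      have hle : cp ≤ (a / go) * co := by
        calc cp = ∫ ω, max (a - X ω) 0 ∂μ := by
              rw [hgpEq]; congr 1; ext ω; rw [ha]; ring_nf
          _ ≤ ∫ ω, (a / go) * max (go - X ω) 0 ∂μ :=
              integral_mono hint2 (hint1.const_mul _) hpt
          _ = (a / go) * ∫ ω, max (go - X ω) 0 ∂μ := integral_const_mul _ _
          _ = (a / go) * co := by rw [← hgoEq]
      rw [div_le_div_iff₀ ha0 hgo]
      have h2 := mul_le_mul_of_nonneg_right hle hgo.le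
      rw [mul_right_comm, div_mul_cancel₀ _ hgo.ne'] at h2
      linarith
    · exact div_le_div₀ hco.le hcpco hgo h
  refine ⟨first, ?_⟩
  have hkey : cp * go ≤ co * a := by
    rw [div_le_div_iff₀ ha0 hgo] at first; linarith
  rw [div_le_iff₀ hgp0]
  have heq : co / cp * (1 - co / gp) * gp = co * a / cp := by
    field_simp
    ring
  rw [heq, le_div_iff₀ hcp]
  linarith
end

section
/- For all reals c^p, c^o, g^p with 0 < c^p ≤ c^o < g^p, the quantity min{ (c^o/c^p)·(1 − c^o/g^p), 1 + c^p/c^o, 1 + c^o/g^p } is at most √2. -/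
/-- for `0 < c^p ≤ c^o < g^p`, the minimum of
`(c^o/c^p)·(1 − c^o/g^p)`, `1 + c^p/c^o` and `1 + c^o/g^p` is at most `√2`. -/
theorem stmt10 (cp co gp : ℝ) (h1 : 0 < cp) (h2 : cp ≤ co) (h3 : co < gp) :
    min (min ((co / cp) * (1 - co / gp)) (1 + cp / co)) (1 + co / gp) ≤
      Real.sqrt 2 := by
  set s := Real.sqrt 2 with hsdef
  have hs : s ^ 2 = 2 := Real.sq_sqrt (by norm_num)
  have hs0 : 0 ≤ s := Real.sqrt_nonneg 2
  have hs1 : 1 < s := by nlinarith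
  have hco : 0 < co := h1.trans_le h2
  have hgp : 0 < gp := hco.trans h3
  by_cases hA : 1 + cp / co ≤ s
  · exact le_trans ((min_le_left _ _).trans (min_le_right _ _)) hA
  by_cases hB : 1 + co / gp ≤ s
  · exact le_trans (min_le_right _ _) hB
  push_neg at hA hB
  have h4 : (s - 1) * co < cp := by
    have : s - 1 < cp / co := by linarith
    calc (s - 1) * co < (cp / co) * co := by
          exact mul_lt_mul_of_pos_right this hco
      _ = cp := by field_simp
  have h5 : s - 1 < co / gp := by linarith
  refine le_trans (min_le_left _ _) (le_trans (min_le_left _ _) ?_)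
  rw [div_mul_eq_mul_div, div_le_iff₀ h1]
  nlinarith [mul_pos hco (sub_pos.mpr h5)]
end

section
/- For all g_x, g_z ≥ 0 with g_x + g_z ≤ 1 and g_x + g_z > 0, min( 1 + g_x, max(1, g_x + 2·g_z)/(g_x + g_z) ) ≤ φ, where φ is the golden ratio. Equivalently, max over x ∈ (0,1] of min( x + 1, max(1/x, 2 − x) ) = φ. -/
/-- for `g_x, g_z ≥ 0` with `0 < g_x + g_z ≤ 1`,
`min(1 + g_x, max(1, g_x + 2g_z)/(g_x + g_z)) ≤ φ`; equivalently,
the maximum over `x ∈ (0,1]` of `min(x + 1, max(1/x, 2 − x))` equals `φ`,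
where `φ = (1+√5)/2`. -/
theorem stmt12 :
    (∀ gx gz : ℝ, 0 ≤ gx → 0 ≤ gz → gx + gz ≤ 1 → 0 < gx + gz →
      min (1 + gx) (max 1 (gx + 2 * gz) / (gx + gz)) ≤ (1 + Real.sqrt 5) / 2) ∧
    IsGreatest
      {v : ℝ | ∃ x ∈ Set.Ioc (0 : ℝ) 1, v = min (x + 1) (max (1 / x) (2 - x))}
      ((1 + Real.sqrt 5) / 2) := by
  have h5 : Real.sqrt 5 ^ 2 = 5 := Real.sq_sqrt (by norm_num)
  have h2 : (2:ℝ) ≤ Real.sqrt 5 := by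
    nlinarith [Real.sqrt_nonneg 5]
  have h3 : Real.sqrt 5 ≤ 3 := by
    nlinarith [Real.sqrt_nonneg 5]
  set s := Real.sqrt 5 with hs
  constructor
  · intro gx gz hgx hgz hsum hpos
    rcases le_or_gt gx ((s - 1) / 2) with h | h
    · exact le_trans (min_le_left _ _) (by linarith)
    · refine le_trans (min_le_right _ _) ?_
      rw [div_le_iff₀ hpos, max_le_iff]
      constructor
      · nlinarith
      · nlinarith
  · constructor
    · refine ⟨(s - 1) / 2, ⟨by linarith, by linarith⟩, ?_⟩
      have hx : (0:ℝ) < (s - 1) / 2 := by linarith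
      have hinv : 1 / ((s - 1) / 2) = (1 + s) / 2 := by
        rw [div_eq_div_iff hx.ne' (two_ne_zero (α := ℝ))]
        nlinarith
      rw [hinv]
      rw [max_eq_left (by nlinarith), min_eq_right (by nlinarith)]
    · rintro v ⟨x, ⟨hx0, hx1⟩, rfl⟩
      rcases le_or_gt x ((s - 1) / 2) with h | h
      · exact le_trans (min_le_left _ _) (by linarith)
      · refine le_trans (min_le_right _ _) ?_
        rw [max_le_iff]
        constructor
        · rw [div_le_iff₀ hx0]
          nlinarith
        · nlinarith
end
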